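/- κ_1 equals the Dirichlet convolution of the Euler totient function φ with κ_0: for all n, κ_1(n) = Σ_{d|n} φ(d)·κ_0(n/d). -/

import Mathlib

open Finset

/-- Recursive divisor function: κ_x(n) = n^x + Σ_{d|n, d<n} κ_x(d). -/
noncomputable def kappa (x : ℂ) (n : ℕ) : ℂ :=
  (n : ℂ) ^ x + ∑ d ∈ n.properDivisors.attach, kappa x d.1
termination_by n
decreasing_by exact (Nat.mem_properDivisors.mp d.2).2

/-- Number of ordered factorizations: K(n) = ε(n) + Σ_{d|n, d<n} K(d). -/
def Kfac (n : ℕ) : ℕ :=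
  (if n = 1 then 1 else 0) + ∑ d ∈ n.properDivisors.attach, Kfac d.1
termination_by n
decreasing_by exact (Nat.mem_properDivisors.mp d.2).2

/-- Divisor power sum σ_x(n) = Σ_{d|n} d^x. -/
noncomputable def sigmaC (x : ℂ) (n : ℕ) : ℂ := ∑ d ∈ n.divisors, (d : ℂ) ^ x

/-- Jordan's totient J_x = μ * id_x. -/
noncomputable def jordan (x : ℂ) (n : ℕ) : ℂ :=
  ∑ d ∈ n.divisors, (ArithmeticFunction.moebius d : ℂ) * ((n / d : ℕ) : ℂ) ^ x

/-!
The recursion says `ζ * κ_x = 2 κ_x - id_x`, i.e. `(2 - ζ) * κ_x = id_x` as arithmetic functions.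
Since `id_0 = ζ` and `id_1 = φ * ζ`, this gives `(2 - ζ) * κ_1 = φ * ζ = (2 - ζ) * (φ * κ_0)`,
and `2 - ζ` is a unit because it takes the value `1` at `1`.
-/

open ArithmeticFunction
open scoped ArithmeticFunction.zeta

theorem kappa_eq_cpow_add_sum_properDivisors (x : ℂ) (n : ℕ) :
    kappa x n = (n : ℂ) ^ x + ∑ d ∈ n.properDivisors, kappa x d := by
  rw [kappa, Finset.sum_attach n.properDivisors (kappa x)]

theorem coe_zeta_mul_apply_eq_add_sum_properDivisors {R : Type*} [Semiring R]
    (f : ArithmeticFunction R) {n : ℕ} (hn : n ≠ 0) :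
    ((ζ : ArithmeticFunction R) * f) n = f n + ∑ d ∈ n.properDivisors, f d := by
  rw [coe_zeta_mul_apply, ← Nat.cons_self_properDivisors hn, Finset.sum_cons]

noncomputable def cpowArith (x : ℂ) : ArithmeticFunction ℂ :=
  ⟨fun n => if n = 0 then 0 else (n : ℂ) ^ x, if_pos rfl⟩

noncomputable def kappaArith (x : ℂ) : ArithmeticFunction ℂ :=
  ⟨fun n => if n = 0 then 0 else kappa x n, if_pos rfl⟩

noncomputable def totientArith : ArithmeticFunction ℂ :=
  ⟨fun n => (n.totient : ℂ), by simp⟩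

theorem cpowArith_apply {x : ℂ} {n : ℕ} (hn : n ≠ 0) : cpowArith x n = (n : ℂ) ^ x :=
  if_neg hn

theorem kappaArith_apply {x : ℂ} {n : ℕ} (hn : n ≠ 0) : kappaArith x n = kappa x n :=
  if_neg hn

theorem totientArith_apply (n : ℕ) : totientArith n = (n.totient : ℂ) := rfl

theorem cpowArith_zero : cpowArith 0 = ζ := by
  ext n
  rcases eq_or_ne n 0 with rfl | hn
  · simp
  · simp [cpowArith_apply hn, hn]

theorem totientArith_mul_zeta : totientArith * ζ = cpowArith 1 := by
  ext n
  rcases eq_or_ne n 0 with rfl | hn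
  · simp
  · simp only [coe_mul_zeta_apply, totientArith_apply, cpowArith_apply hn, Complex.cpow_one]
    exact_mod_cast Nat.sum_totient n

theorem two_sub_zeta_mul_kappaArith (x : ℂ) : (2 - ζ) * kappaArith x = cpowArith x := by
  rw [sub_mul, two_mul, sub_eq_iff_eq_add]
  ext n
  rcases eq_or_ne n 0 with rfl | hn
  · simp
  have hproper : ∀ d ∈ n.properDivisors, kappaArith x d = kappa x d := fun d hd =>
    kappaArith_apply (Nat.pos_of_mem_properDivisors hd).ne'
  rw [ArithmeticFunction.add_apply, ArithmeticFunction.add_apply,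
    coe_zeta_mul_apply_eq_add_sum_properDivisors _ hn, Finset.sum_congr rfl hproper,
    kappaArith_apply hn, cpowArith_apply hn, kappa_eq_cpow_add_sum_properDivisors x n]
  ring

theorem isUnit_two_sub_zeta : IsUnit (2 - ζ : ArithmeticFunction ℂ) := by
  rw [isUnit_iff_isUnit_apply_one, ← one_add_one_eq_two, sub_eq_add_neg,
    ArithmeticFunction.add_apply, ArithmeticFunction.add_apply, ArithmeticFunction.neg_apply,
    one_one, natCoe_apply, zeta_apply]
  norm_num

theorem kappaArith_one_eq_totientArith_mul : kappaArith 1 = totientArith * kappaArith 0 := by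
  apply isUnit_two_sub_zeta.mul_left_cancel
  rw [two_sub_zeta_mul_kappaArith, mul_left_comm, two_sub_zeta_mul_kappaArith, cpowArith_zero,
    totientArith_mul_zeta]

theorem stmt5 (n : ℕ) (hn : 0 < n) :
    kappa 1 n = ∑ d ∈ n.divisors, (Nat.totient d : ℂ) * kappa 0 (n / d) := by
  rw [← kappaArith_apply hn.ne', kappaArith_one_eq_totientArith_mul, mul_apply,
    Nat.sum_divisorsAntidiagonal (fun d e => totientArith d * kappaArith 0 e)]
  refine Finset.sum_congr rfl fun d hd => ?_
  rw [totientArith_apply, kappaArith_apply (Nat.div_pos (Nat.divisor_le hd)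
    (Nat.pos_of_mem_divisors hd)).ne']
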